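/- Let m be an odd composite natural number, let c be the least prime divisor of m, and set d = m/c. Then 2^{c-1} is not congruent to 1 modulo Φ_d(2), where Φ_d(2) is the value of the d-th cyclotomic polynomial at 2. (Indeed, the multiplicative order of 2 modulo Φ_d(2) divides d, no prime divisor of d divides c − 1, and Φ_d(2) > 1.) -/

import Mathlib

open Polynomial

theorem Nat.coprime_minFac_sub_one (m : ℕ) : Nat.Coprime (m.minFac - 1) m := by
  rcases eq_or_ne m 1 with rfl | hm
  · exact Nat.coprime_one_right _
  have hp : 2 ≤ m.minFac := (Nat.minFac_prime hm).two_le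
  refine Nat.coprime_of_dvd fun k hk hkp hkm => ?_
  have hle : m.minFac ≤ k := Nat.minFac_le_of_dvd hk.two_le hkm
  have hlt : k ≤ m.minFac - 1 := Nat.le_of_dvd (by omega) hkp
  omega

theorem Nat.one_lt_div_minFac {m : ℕ} (hm : 1 < m) (hcomp : ¬ m.Prime) : 1 < m / m.minFac := by
  rw [Nat.lt_div_iff_mul_lt' (Nat.minFac_dvd m), mul_one]
  exact (Nat.not_prime_iff_minFac_lt hm).1 hcomp

theorem Int.pow_gcd_modEq_one_iff {a n : ℤ} {k l : ℕ} :
    a ^ k.gcd l ≡ 1 [ZMOD n] ↔ a ^ k ≡ 1 [ZMOD n] ∧ a ^ l ≡ 1 [ZMOD n] := by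
  rw [← Int.modEq_natAbs, ← Int.modEq_natAbs (a := a ^ k), ← Int.modEq_natAbs (a := a ^ l)]
  simp only [← ZMod.intCast_eq_intCast_iff, Int.cast_pow, Int.cast_one]
  exact pow_gcd_eq_one

theorem Polynomial.pow_modEq_one_cyclotomic_eval (n : ℕ) (a : ℤ) :
    a ^ n ≡ 1 [ZMOD (cyclotomic n ℤ).eval a] :=
  (Int.modEq_iff_dvd.2 (by simpa using eval_dvd (x := a) (cyclotomic.dvd_X_pow_sub_one n ℤ))).symm

theorem two_pow_not_modEq_one_general (m : ℕ) (hm : 1 < m) (hcomp : ¬ m.Prime) :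
    ¬ (2 : ℤ) ^ (m.minFac - 1) ≡ 1 [ZMOD (cyclotomic (m / m.minFac) ℤ).eval 2] := by
  intro h
  set d := m / m.minFac
  have hd : 1 < d := Nat.one_lt_div_minFac hm hcomp
  have hcop : Nat.Coprime (m.minFac - 1) d :=
    (Nat.coprime_minFac_sub_one m).coprime_dvd_right (Nat.div_dvd_of_dvd (Nat.minFac_dvd m))
  have htwo : (2 : ℤ) ≡ 1 [ZMOD (cyclotomic d ℤ).eval 2] := by
    simpa [hcop.gcd_eq_one] using
      Int.pow_gcd_modEq_one_iff.2 ⟨h, pow_modEq_one_cyclotomic_eval d 2⟩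
  have hbig : 1 < ((cyclotomic d ℤ).eval 2).natAbs := by
    simpa using sub_one_lt_natAbs_cyclotomic_eval (q := 2) hd (by norm_num)
  have hunit : (cyclotomic d ℤ).eval 2 ∣ 1 := by simpa using Int.modEq_iff_dvd.1 htwo.symm
  exact hbig.ne' (Nat.dvd_one.1 (Int.natAbs_dvd_natAbs.2 hunit))

theorem two_pow_not_modEq_one (m : ℕ) (hodd : Odd m) (hm : 1 < m) (hcomp : ¬ m.Prime) :
    ¬ (2 : ℤ) ^ (m.minFac - 1) ≡ 1 [ZMOD (cyclotomic (m / m.minFac) ℤ).eval 2] :=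
  two_pow_not_modEq_one_general m hm hcomp
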